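/- Let T ≥ 1, and let U⁽¹⁾, …, U⁽ᵀ⁾ ∈ ℝ^{p×q}, X⁽¹⁾, …, X⁽ᵀ⁾ ∈ ℝ^{q×N}, U⁰ ∈ ℝ^{p×q}, λ > 0, and c > 0. Suppose the exact Gram alignment X⁽ᵗ⁾ (X⁽ᵗ⁾)ᵀ = c · (U⁽ᵗ⁾)ᵀ U⁽ᵗ⁾ holds for every t = 1, …, T, and set Y⁽ᵗ⁾ = U⁽ᵗ⁾ X⁽ᵗ⁾, Y = [Y⁽¹⁾, …, Y⁽ᵀ⁾], X = [X⁽¹⁾, …, X⁽ᵀ⁾], and λ̃ = λ / c. Then the closed-form MAP solution satisfies (Y Xᵀ + λ U⁰)(X Xᵀ + λ I)⁻¹ = (Σ_{t=1}^{T} U⁽ᵗ⁾ (U⁽ᵗ⁾)ᵀ U⁽ᵗ⁾ + λ̃ U⁰)(Σ_{t=1}^{T} (U⁽ᵗ⁾)ᵀ U⁽ᵗ⁾ + λ̃ I)⁻¹. (Data-free closed-form estimate of the merged task vector.) -/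

import Mathlib

/-! Gram alignment turns `X Xᵀ` into `c Σ_t (U⁽ᵗ⁾)ᵀ U⁽ᵗ⁾` and `Y Xᵀ` into `c Σ_t U⁽ᵗ⁾ (U⁽ᵗ⁾)ᵀ U⁽ᵗ⁾`;
writing `λ = c λ̃`, both factors of the closed form become `c` times their data-free
counterparts, and the common scalar cancels from `A B⁻¹`. -/

open Matrix

/-- Horizontal concatenation `[A⁽¹⁾, …, A⁽ᵀ⁾]` of `T` matrices with `N` columns
each, the columns being indexed by pairs `(t, n)`. -/
def hcat {p N T : ℕ} (A : Fin T → Matrix (Fin p) (Fin N) ℝ) :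
    Matrix (Fin p) (Fin T × Fin N) ℝ :=
  Matrix.of fun i tn => A tn.1 i tn.2

namespace Matrix

variable {n m K : Type*} [Fintype n] [DecidableEq n] [Field K]

-- Holds also for singular `A`, where both sides are the junk value `0`.
theorem inv_smul_of_ne_zero {k : K} (hk : k ≠ 0) (A : Matrix n n K) :
    (k • A)⁻¹ = k⁻¹ • A⁻¹ := by
  by_cases hA : IsUnit A.det
  · exact inv_smul' A (Units.mk0 k hk) hA
  · have hkA : ¬IsUnit (k • A).det := by
      rwa [det_smul, IsUnit.mul_iff, not_and_or, or_iff_right (by simp [hk])]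
    rw [nonsing_inv_apply_not_isUnit _ hA, nonsing_inv_apply_not_isUnit _ hkA, smul_zero]

theorem smul_mul_inv_smul {k : K} (hk : k ≠ 0) (A : Matrix m n K) (B : Matrix n n K) :
    (k • A) * (k • B)⁻¹ = A * B⁻¹ := by
  rw [inv_smul_of_ne_zero hk, Matrix.smul_mul, Matrix.mul_smul, smul_smul, mul_inv_cancel₀ hk,
    one_smul]

end Matrix

theorem hcat_mul_transpose_hcat {p r N T : ℕ} (A : Fin T → Matrix (Fin p) (Fin N) ℝ)
    (B : Fin T → Matrix (Fin r) (Fin N) ℝ) :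
    hcat A * (hcat B)ᵀ = ∑ t, A t * (B t)ᵀ := by
  ext i j
  simp [hcat, mul_apply, Matrix.sum_apply, Fintype.sum_prod_type]

section GramAlignment

variable {p q N T : ℕ} {Uf : Fin T → Matrix (Fin p) (Fin q) ℝ}
  {Xf : Fin T → Matrix (Fin q) (Fin N) ℝ} {c : ℝ}

theorem hcat_mul_transpose_hcat_of_gram (halign : ∀ t, Xf t * (Xf t)ᵀ = c • ((Uf t)ᵀ * Uf t)) :
    hcat Xf * (hcat Xf)ᵀ = c • ∑ t, (Uf t)ᵀ * Uf t := by
  simp_rw [hcat_mul_transpose_hcat, halign, Finset.smul_sum]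

theorem hcat_residual_mul_transpose_hcat_of_gram
    (halign : ∀ t, Xf t * (Xf t)ᵀ = c • ((Uf t)ᵀ * Uf t)) :
    hcat (fun t => Uf t * Xf t) * (hcat Xf)ᵀ = c • ∑ t, Uf t * (Uf t)ᵀ * Uf t := by
  simp_rw [hcat_mul_transpose_hcat, Matrix.mul_assoc, halign, Matrix.mul_smul, Finset.smul_sum]

end GramAlignment

theorem data_free_closed_form_general {p q N : ℕ} (T : ℕ)
    (Uf : Fin T → Matrix (Fin p) (Fin q) ℝ)
    (Xf : Fin T → Matrix (Fin q) (Fin N) ℝ)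
    (U0 : Matrix (Fin p) (Fin q) ℝ) (lam c : ℝ) (hc : 0 < c)
    (halign : ∀ t, Xf t * (Xf t)ᵀ = c • ((Uf t)ᵀ * Uf t)) :
    (hcat (fun t => Uf t * Xf t) * (hcat Xf)ᵀ + lam • U0)
        * (hcat Xf * (hcat Xf)ᵀ + lam • (1 : Matrix (Fin q) (Fin q) ℝ))⁻¹
      = ((∑ t, Uf t * (Uf t)ᵀ * Uf t) + (lam / c) • U0)
        * ((∑ t, (Uf t)ᵀ * Uf t) + (lam / c) • (1 : Matrix (Fin q) (Fin q) ℝ))⁻¹ := by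
  have hscale : ∀ {a b : ℕ} (M : Matrix (Fin a) (Fin b) ℝ), lam • M = c • ((lam / c) • M) :=
    fun M => by rw [smul_smul, mul_div_cancel₀ lam hc.ne']
  rw [hcat_residual_mul_transpose_hcat_of_gram halign, hcat_mul_transpose_hcat_of_gram halign,
    hscale U0, hscale 1, ← smul_add, ← smul_add, smul_mul_inv_smul hc.ne']

/-- data-free closed-form estimate of the merged task vector:
if `X⁽ᵗ⁾ (X⁽ᵗ⁾)ᵀ = c (U⁽ᵗ⁾)ᵀ U⁽ᵗ⁾` for every `t`, then with `Y⁽ᵗ⁾ = U⁽ᵗ⁾ X⁽ᵗ⁾`,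
`Y = [Y⁽¹⁾, …, Y⁽ᵀ⁾]`, `X = [X⁽¹⁾, …, X⁽ᵀ⁾]`, `λ̃ = λ/c`, one has
`(Y Xᵀ + λ U⁰)(X Xᵀ + λ I)⁻¹ =
 (Σ_t U⁽ᵗ⁾ (U⁽ᵗ⁾)ᵀ U⁽ᵗ⁾ + λ̃ U⁰)(Σ_t (U⁽ᵗ⁾)ᵀ U⁽ᵗ⁾ + λ̃ I)⁻¹`. -/
theorem data_free_closed_form {p q N : ℕ} (T : ℕ) (hT : 1 ≤ T)
    (Uf : Fin T → Matrix (Fin p) (Fin q) ℝ)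
    (Xf : Fin T → Matrix (Fin q) (Fin N) ℝ)
    (U0 : Matrix (Fin p) (Fin q) ℝ) (lam c : ℝ) (hlam : 0 < lam) (hc : 0 < c)
    (halign : ∀ t, Xf t * (Xf t)ᵀ = c • ((Uf t)ᵀ * Uf t)) :
    (hcat (fun t => Uf t * Xf t) * (hcat Xf)ᵀ + lam • U0)
        * (hcat Xf * (hcat Xf)ᵀ + lam • (1 : Matrix (Fin q) (Fin q) ℝ))⁻¹
      = ((∑ t, Uf t * (Uf t)ᵀ * Uf t) + (lam / c) • U0)
        * ((∑ t, (Uf t)ᵀ * Uf t) + (lam / c) • (1 : Matrix (Fin q) (Fin q) ℝ))⁻¹ :=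
  data_free_closed_form_general T Uf Xf U0 lam c hc halign
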